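/- arXiv:1309.5589 — 3 statements merged into one kernel-verified Lean document; each statement's English description precedes it below -/
import Mathlib

section
/- Let (X,d) be a metric space and T : X → X a generalized quasi-contraction with constant q ∈ [0,1). Then for every x ∈ X and every n ∈ ℕ, the diameter of the finite orbit O_T(x,n) = {x, Tx, ..., Tⁿx} satisfies δ[O_T(x,n)] ≤ (1 / (1 − q)) · d(x, Tx), where δ[O_T(x,n)] = max{d(Tⁱx, Tʲx) : 0 ≤ i, j ≤ n}. -/
/-!
Let `D` be the diameter of `{x, Tx, …, Tⁿx}`. For `0 < i < j ≤ n` the points in the maximum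
bounding `d(Tⁱx, Tʲx)` are `Tᵏx` with `k ≤ i + 1 ≤ j`, so `d(Tⁱx, Tʲx) ≤ q D`; distances from
`x` itself pass through `Tx`, giving `d(x, Tʲx) ≤ d(x, Tx) + q D`. Hence `D ≤ d(x, Tx) + q D`.
-/

def IsGeneralizedQuasiContraction {X : Type*} [MetricSpace X] (T : X → X) (q : ℝ) : Prop :=
  ∀ x y : X, dist (T x) (T y) ≤ q * (max (dist x y) (max (dist x (T x)) (max (dist y (T y))
    (max (dist x (T y)) (max (dist y (T x)) (max (dist (T (T x)) x) (max (dist (T (T x)) (T x))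
    (max (dist (T (T x)) y) (dist (T (T x)) (T y))))))))))

/-- The diameter `δ[O_T(x,n)]` of the finite orbit `{x, Tx, …, Tⁿx}`. -/
noncomputable def orbitDiam {X : Type*} [MetricSpace X] (T : X → X) (x : X) (n : ℕ) : ℝ :=
  (Finset.Iic n ×ˢ Finset.Iic n).sup' ⟨(0, 0), by simp⟩ fun p => dist (T^[p.1] x) (T^[p.2] x)

section

variable {X : Type*} [MetricSpace X] {T : X → X} {q : ℝ} {x : X} {n : ℕ}

theorem dist_iterate_le_orbitDiam {i j : ℕ} (hi : i ≤ n) (hj : j ≤ n) :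
    dist (T^[i] x) (T^[j] x) ≤ orbitDiam T x n :=
  Finset.le_sup' (fun p : ℕ × ℕ => dist (T^[p.1] x) (T^[p.2] x)) (b := (i, j))
    (Finset.mem_product.2 ⟨Finset.mem_Iic.2 hi, Finset.mem_Iic.2 hj⟩)

theorem orbitDiam_nonneg : 0 ≤ orbitDiam T x n :=
  dist_nonneg.trans (dist_iterate_le_orbitDiam (T := T) (x := x) (Nat.zero_le n) (Nat.zero_le n))

theorem IsGeneralizedQuasiContraction.dist_iterate_le_mul_orbitDiam
    (hT : IsGeneralizedQuasiContraction T q) (hq : 0 ≤ q) {i j : ℕ} (hi : 0 < i) (hij : i ≤ j)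
    (hj : j ≤ n) : dist (T^[i] x) (T^[j] x) ≤ q * orbitDiam T x n := by
  rcases hij.eq_or_lt with rfl | hij
  · rw [dist_self]
    exact mul_nonneg hq orbitDiam_nonneg
  obtain ⟨a, rfl⟩ : ∃ a, i = a + 1 := ⟨i - 1, by omega⟩
  obtain ⟨b, rfl⟩ : ∃ b, j = b + 1 := ⟨j - 1, by omega⟩
  rw [Function.iterate_succ_apply', Function.iterate_succ_apply']
  refine (hT _ _).trans (mul_le_mul_of_nonneg_left ?_ hq)
  simp only [← Function.iterate_succ_apply' T, max_le_iff]
  refine ⟨?_, ?_, ?_, ?_, ?_, ?_, ?_, ?_, ?_⟩ <;>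
    exact dist_iterate_le_orbitDiam (by omega) (by omega)

theorem IsGeneralizedQuasiContraction.dist_iterate_le_add_mul_orbitDiam
    (hT : IsGeneralizedQuasiContraction T q) (hq : 0 ≤ q) {i j : ℕ} (hi : i ≤ n) (hj : j ≤ n) :
    dist (T^[i] x) (T^[j] x) ≤ dist x (T x) + q * orbitDiam T x n := by
  wlog hij : i ≤ j generalizing i j
  · rw [dist_comm]
    exact this hj hi (le_of_not_ge hij)
  rcases Nat.eq_zero_or_pos i with rfl | hi₀
  · rcases Nat.eq_zero_or_pos j with rfl | hj₀
    · rw [dist_self]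
      exact add_nonneg dist_nonneg (mul_nonneg hq orbitDiam_nonneg)
    calc dist (T^[0] x) (T^[j] x) ≤ dist x (T x) + dist (T^[1] x) (T^[j] x) := dist_triangle _ _ _
      _ ≤ dist x (T x) + q * orbitDiam T x n :=
        add_le_add_right (hT.dist_iterate_le_mul_orbitDiam hq Nat.one_pos hj₀ hj) _
  · exact (hT.dist_iterate_le_mul_orbitDiam hq hi₀ hij hj).trans (le_add_of_nonneg_left dist_nonneg)

theorem IsGeneralizedQuasiContraction.orbitDiam_le (hT : IsGeneralizedQuasiContraction T q)
    (hq0 : 0 ≤ q) (hq1 : q < 1) : orbitDiam T x n ≤ dist x (T x) / (1 - q) := by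
  have h : orbitDiam T x n ≤ dist x (T x) + q * orbitDiam T x n :=
    Finset.sup'_le _ _ fun p hp => by
      obtain ⟨hp₁, hp₂⟩ := Finset.mem_product.1 hp
      exact hT.dist_iterate_le_add_mul_orbitDiam hq0 (Finset.mem_Iic.1 hp₁) (Finset.mem_Iic.1 hp₂)
  rw [le_div_iff₀ (by linarith)]
  linarith

end

/-- The diameter of any finite orbit `{x, Tx, …, Tⁿx}` of a generalized
quasi-contraction is at most `(1 / (1 - q)) · d(x, Tx)`. -/
theorem stmt3 {X : Type*} [MetricSpace X] (T : X → X) (q : ℝ) (hq0 : 0 ≤ q) (hq1 : q < 1)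
    (hT : ∀ x y : X, dist (T x) (T y) ≤ q * (max (dist x y) (max (dist x (T x)) (max (dist y (T y)) (max (dist x (T y)) (max (dist y (T x)) (max (dist (T (T x)) x) (max (dist (T (T x)) (T x)) (max (dist (T (T x)) y) (dist (T (T x)) (T y)))))))))))
    : ∀ (x : X) (n i j : ℕ), i ≤ n → j ≤ n →
      dist (T^[i] x) (T^[j] x) ≤ 1 / (1 - q) * dist x (T x) := by
  intro x n i j hi hj
  rw [one_div_mul_eq_div]
  exact (dist_iterate_le_orbitDiam hi hj).trans
    (IsGeneralizedQuasiContraction.orbitDiam_le hT hq0 hq1)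
end

section
/- Let (X,d) be a metric space and T : X → X a map such that X is T-orbitally complete and there exist k ∈ ℕ, k ≥ 1, and q ∈ [0,1) such that for all x, y ∈ X, d(Tᵏx, Tᵏy) ≤ q · max{d(x,y), d(x,Tᵏx), d(y,Tᵏy), d(x,Tᵏy), d(y,Tᵏx)}, with unique fixed point x*. Then for every x ∈ X and n ∈ ℕ, d(Tⁿx, x*) ≤ (qᵐ / (1 − q)) · max{d(Tⁱx, Tⁱ⁺ᵏx) : i = 0, 1, ..., k−1}, where m is the greatest integer not exceeding n/k. -/
/-!
Write `S = Tᵏ` and `n = k·m + r`. For a quasi-contraction `S` with constant `q`, for a bounded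
set `s` and `w, w', S w, S w' ∈ s` we have `d(S w, S w') ≤ q · diam s`.
Hence if `y, S y ∈ s` and every other point of `s` is the image of a point of `s`, then
`d(y, S w) ≤ d(y, S y) + q · diam s`, so `diam s ≤ d(y, S y) / (1 - q)`. Applied to finite pieces
of the orbit of `y` this shows that the orbit is bounded; applied to the orbit of `y = Tʳ x`
together with the fixed point `x*` (an `S`-invariant set), and combined with
`diam (S '' s) ≤ q · diam s` iterated `m` times, it gives `d(Sᵐ y, x*) ≤ qᵐ d(y, S y) / (1 - q)`.
-/

open Bornology Metric Set

def IsQuasiContraction {X : Type*} [MetricSpace X] (S : X → X) (q : ℝ) : Prop :=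
  ∀ x y : X, dist (S x) (S y) ≤ q * (max (dist x y) (max (dist x (S x))
    (max (dist y (S y)) (max (dist x (S y)) (dist y (S x))))))

namespace IsQuasiContraction

variable {X : Type*} [MetricSpace X] {S : X → X} {q : ℝ} {s : Set X}

theorem dist_le_mul_diam (hS : IsQuasiContraction S q) (hq0 : 0 ≤ q) (hs : IsBounded s)
    {x y : X} (hx : x ∈ s) (hy : y ∈ s) (hSx : S x ∈ s) (hSy : S y ∈ s) :
    dist (S x) (S y) ≤ q * diam s := by
  refine (hS x y).trans (mul_le_mul_of_nonneg_left ?_ hq0)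
  have h {a b : X} (ha : a ∈ s) (hb : b ∈ s) : dist a b ≤ diam s := dist_le_diam_of_mem hs ha hb
  exact max_le (h hx hy) (max_le (h hx hSx) (max_le (h hy hSy) (max_le (h hx hSy) (h hy hSx))))

theorem diam_image_le (hS : IsQuasiContraction S q) (hq0 : 0 ≤ q) (hs : IsBounded s)
    (hmaps : MapsTo S s s) : diam (S '' s) ≤ q * diam s := by
  refine diam_le_of_forall_dist_le (mul_nonneg hq0 diam_nonneg) ?_
  rintro _ ⟨x, hx, rfl⟩ _ ⟨y, hy, rfl⟩
  exact hS.dist_le_mul_diam hq0 hs hx hy (hmaps hx) (hmaps hy)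

theorem diam_image_iterate_le (hS : IsQuasiContraction S q) (hq0 : 0 ≤ q) (hs : IsBounded s)
    (hmaps : MapsTo S s s) (m : ℕ) : diam (S^[m] '' s) ≤ q ^ m * diam s := by
  induction m with
  | zero => simp
  | succ m ih =>
    have hsub : S^[m] '' s ⊆ s := (hmaps.iterate m).image_subset
    have hmaps' : MapsTo S (S^[m] '' s) (S^[m] '' s) := by
      rintro _ ⟨w, hw, rfl⟩
      exact ⟨S w, hmaps hw, by rw [← Function.iterate_succ_apply, Function.iterate_succ_apply']⟩
    calc diam (S^[m + 1] '' s) = diam (S '' (S^[m] '' s)) := by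
          rw [Function.iterate_succ', image_comp]
      _ ≤ q * diam (S^[m] '' s) := hS.diam_image_le hq0 (hs.subset hsub) hmaps'
      _ ≤ q * (q ^ m * diam s) := by gcongr
      _ = q ^ (m + 1) * diam s := by ring

theorem diam_le_of_subset_insert_image (hS : IsQuasiContraction S q) (hq0 : 0 ≤ q)
    (hq1 : q < 1) {y : X} (hs : IsBounded s) (hy : y ∈ s) (hSy : S y ∈ s)
    (hsub : s ⊆ insert y (S '' s)) : diam s ≤ dist y (S y) / (1 - q) := by
  have hbound : 0 ≤ dist y (S y) + q * diam s := by positivity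
  have hy_image {w : X} (hw : w ∈ s) (hSw : S w ∈ s) :
      dist y (S w) ≤ dist y (S y) + q * diam s :=
    (dist_triangle _ _ _).trans (by gcongr; exact hS.dist_le_mul_diam hq0 hs hy hw hSy hSw)
  have hdiam : diam s ≤ dist y (S y) + q * diam s := by
    refine diam_le_of_forall_dist_le hbound fun p hp p' hp' => ?_
    rcases hsub hp with rfl | ⟨v, hv, rfl⟩ <;> rcases hsub hp' with rfl | ⟨w, hw, rfl⟩
    · simpa using hbound
    · exact hy_image hw hp'
    · exact dist_comm (S v) p' ▸ hy_image hv hp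
    · exact (hS.dist_le_mul_diam hq0 hs hv hw hp hp').trans (le_add_of_nonneg_left dist_nonneg)
  rw [le_div_iff₀ (sub_pos.2 hq1)]
  linarith

theorem dist_iterate_le (hS : IsQuasiContraction S q) (hq0 : 0 ≤ q) (hq1 : q < 1) (y : X)
    (a b : ℕ) : dist (S^[a] y) (S^[b] y) ≤ dist y (S y) / (1 - q) := by
  set s := (S^[·] y) '' Iic (a + b + 1)
  have hs : IsBounded s := ((finite_Iic _).image _).isBounded
  have hmem {i : ℕ} (hi : i ≤ a + b + 1) : S^[i] y ∈ s := mem_image_of_mem _ hi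
  have hsub : s ⊆ insert y (S '' s) := by
    rintro _ ⟨_ | i, hi, rfl⟩
    · exact mem_insert _ _
    · exact mem_insert_of_mem _
        ⟨S^[i] y, hmem (by simp only [mem_Iic] at hi; omega), (Function.iterate_succ_apply' ..).symm⟩
  calc dist (S^[a] y) (S^[b] y) ≤ diam s := dist_le_diam_of_mem hs (hmem (by omega)) (hmem (by omega))
    _ ≤ dist y (S y) / (1 - q) :=
      hS.diam_le_of_subset_insert_image hq0 hq1 hs (hmem (Nat.zero_le _)) (hmem (i := 1) (by omega)) hsub

theorem isBounded_range_iterate (hS : IsQuasiContraction S q) (hq0 : 0 ≤ q) (hq1 : q < 1)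
    (y : X) : IsBounded (range fun n => S^[n] y) :=
  isBounded_iff.2 ⟨_, by rintro _ ⟨a, rfl⟩ _ ⟨b, rfl⟩; exact hS.dist_iterate_le hq0 hq1 y a b⟩

theorem dist_iterate_le_of_isFixedPt (hS : IsQuasiContraction S q) (hq0 : 0 ≤ q) (hq1 : q < 1)
    {z : X} (hz : S z = z) (y : X) (m : ℕ) :
    dist (S^[m] y) z ≤ q ^ m * (dist y (S y) / (1 - q)) := by
  set s := insert z (range fun n => S^[n] y)
  have hs : IsBounded s := (hS.isBounded_range_iterate hq0 hq1 y).insert z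
  have hmem (n : ℕ) : S^[n] y ∈ s := mem_insert_of_mem _ ⟨n, rfl⟩
  have hmaps : MapsTo S s s := by
    rintro p (hp | ⟨n, rfl⟩)
    · rw [hp, hz]; exact mem_insert _ _
    · rw [← Function.iterate_succ_apply' S n y]; exact hmem (n + 1)
  have hsub : s ⊆ insert y (S '' s) := by
    rintro p (hp | ⟨_ | n, rfl⟩)
    · exact mem_insert_of_mem _ ⟨z, mem_insert _ _, hz.trans hp.symm⟩
    · exact mem_insert _ _
    · exact mem_insert_of_mem _ ⟨S^[n] y, hmem n, (Function.iterate_succ_apply' ..).symm⟩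
  calc dist (S^[m] y) z ≤ diam (S^[m] '' s) :=
        dist_le_diam_of_mem (hs.subset (hmaps.iterate m).image_subset)
          (mem_image_of_mem _ (hmem 0)) ⟨z, mem_insert _ _, Function.iterate_fixed hz m⟩
    _ ≤ q ^ m * diam s := hS.diam_image_iterate_le hq0 hs hmaps m
    _ ≤ q ^ m * (dist y (S y) / (1 - q)) := by
      gcongr
      exact hS.diam_le_of_subset_insert_image hq0 hq1 hs (hmem 0) (hmem 1) hsub

end IsQuasiContraction

open Filter Topology

/-- Error estimate in Ćirić's theorem for an iterate `Tᵏ` that is a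
quasi-contraction. -/
theorem stmt10 {X : Type*} [MetricSpace X] (T : X → X) (k : ℕ) (hk : 1 ≤ k)
    (q : ℝ) (hq0 : 0 ≤ q) (hq1 : q < 1)
    (hT : ∀ x y : X, dist (T^[k] x) (T^[k] y) ≤ q * (max (dist x y) (max (dist x (T^[k] x)) (max (dist y (T^[k] y)) (max (dist x (T^[k] y)) (dist y (T^[k] x)))))))
    (xs : X) (hfix : T xs = xs)
    : ∀ (x : X) (n : ℕ), dist (T^[n] x) xs ≤ q ^ (n / k) / (1 - q) *
        (Finset.range k).sup' (Finset.nonempty_range_iff.mpr (by omega))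
          (fun i => dist (T^[i] x) (T^[i + k] x)) := by
  intro x n
  have hTk : IsQuasiContraction (T^[k]) q := hT
  have hsplit : T^[n] x = (T^[k])^[n / k] (T^[n % k] x) := by
    rw [← Function.iterate_mul, ← Function.iterate_add_apply, Nat.div_add_mod]
  have hdisplacement : dist (T^[n % k] x) (T^[k] (T^[n % k] x)) ≤
      (Finset.range k).sup' (Finset.nonempty_range_iff.mpr (by omega))
        (fun i => dist (T^[i] x) (T^[i + k] x)) := by
    rw [← Function.iterate_add_apply, Nat.add_comm k]
    exact Finset.le_sup' (fun i => dist (T^[i] x) (T^[i + k] x))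
      (Finset.mem_range.2 (Nat.mod_lt n (by omega)))
  have hcoeff : 0 ≤ q ^ (n / k) / (1 - q) := div_nonneg (pow_nonneg hq0 _) (by linarith)
  rw [hsplit]
  calc _ ≤ q ^ (n / k) * (dist (T^[n % k] x) (T^[k] (T^[n % k] x)) / (1 - q)) :=
        hTk.dist_iterate_le_of_isFixedPt hq0 hq1 (Function.iterate_fixed hfix k) _ _
    _ = q ^ (n / k) / (1 - q) * dist (T^[n % k] x) (T^[k] (T^[n % k] x)) := by ring
    _ ≤ _ := mul_le_mul_of_nonneg_left hdisplacement hcoeff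
end

section
/- Let (X,d) be a metric space, F : X → BN(X) a multi-valued map which is a generalized quasi-contraction with constant q ∈ (0,1), and let a ∈ (0,1). Suppose T : X → X is a (single-valued) map such that for every x ∈ X, Tx ∈ Fx and d(x, Tx) ≥ q^a · ρ(x, Fx). Then T is a (single-valued) generalized quasi-contraction with constant q^{1−a}, i.e. for all x, y ∈ X, d(Tx,Ty) ≤ q^{1−a} · max{d(x,y), d(x,Tx), d(y,Ty), d(x,Ty), d(y,Tx), d(T²x,x), d(T²x,Tx), d(T²x,y), d(T²x,Ty)}. -/
open Filter Topology

/-- `setRho A B = sup {dist a b : a ∈ A, b ∈ B}` (denoted ρ in the paper). -/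
noncomputable def setRho {X : Type*} [MetricSpace X] (A B : Set X) : ℝ :=
  sSup {r : ℝ | ∃ a ∈ A, ∃ b ∈ B, r = dist a b}

/-- `setD A B = inf {dist a b : a ∈ A, b ∈ B}` (denoted D in the paper). -/
noncomputable def setD {X : Type*} [MetricSpace X] (A B : Set X) : ℝ :=
  sInf {r : ℝ | ∃ a ∈ A, ∃ b ∈ B, r = dist a b}

/-!
`Tx ∈ Fx` and `Ty ∈ Fy` give `d(Tx, Ty) ≤ ρ(Fx, Fy)`, which the contraction
condition bounds by `q` times the maximum of the nine set-valued quantities. Since `T²x ∈ F²x`,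
every `D`-term is at most the corresponding point distance, and the selection condition gives
`ρ(x, Fx) ≤ q⁻ᵃ · d(x, Tx)`. So each of the nine terms is at most `q⁻ᵃ` times the single-valued
maximum, and `q · q⁻ᵃ = q^(1-a)`.
-/

section SetDistances

variable {X : Type*} [MetricSpace X] {A B : Set X} {a b : X}

lemma setD_le_dist (ha : a ∈ A) (hb : b ∈ B) : setD A B ≤ dist a b :=
  csInf_le ⟨0, by rintro r ⟨a', -, b', -, rfl⟩; exact dist_nonneg⟩ ⟨a, ha, b, hb, rfl⟩

lemma dist_le_setRho (hA : Bornology.IsBounded A) (hB : Bornology.IsBounded B)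
    (ha : a ∈ A) (hb : b ∈ B) : dist a b ≤ setRho A B := by
  refine le_csSup ⟨Metric.diam A + dist a b + Metric.diam B, ?_⟩ ⟨a, ha, b, hb, rfl⟩
  rintro r ⟨a', ha', b', hb', rfl⟩
  calc dist a' b' ≤ dist a' a + dist a b + dist b b' := dist_triangle4 a' a b b'
    _ ≤ Metric.diam A + dist a b + Metric.diam B := by
        gcongr
        · exact Metric.dist_le_diam_of_mem hA ha' ha
        · exact Metric.dist_le_diam_of_mem hB hb hb'

end SetDistances

lemma le_rpow_neg_mul_of_rpow_mul_le {q a r s : ℝ} (hq : 0 < q) (h : q ^ a * r ≤ s) :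
    r ≤ q ^ (-a) * s := by
  rw [Real.rpow_neg hq.le, ← div_eq_inv_mul, le_div_iff₀' (Real.rpow_pos_of_pos hq a)]
  exact h

lemma le_rpow_neg_mul_of_le {q a t s : ℝ} (hq0 : 0 < q) (hq1 : q ≤ 1) (ha : 0 ≤ a)
    (hs : 0 ≤ s) (h : t ≤ s) : t ≤ q ^ (-a) * s :=
  h.trans (le_mul_of_one_le_left hs (Real.one_le_rpow_of_pos_of_le_one_of_nonpos hq0 hq1
    (neg_nonpos.mpr ha)))

theorem stmt14_general {X : Type*} [MetricSpace X] (F : X → Set X)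
    (hbd : ∀ x : X, Bornology.IsBounded (F x))
    (q : ℝ) (hq0 : 0 < q) (hq1 : q < 1) (a : ℝ) (ha0 : 0 < a)
    (hF : ∀ x y : X, setRho (F x) (F y) ≤ q * (max (dist x y) (max (setRho {x} (F x)) (max (setRho {y} (F y)) (max (setD {x} (F y)) (max (setD {y} (F x)) (max (setD (⋃ z ∈ F x, F z) {x}) (max (setD (⋃ z ∈ F x, F z) (F x)) (max (setD (⋃ z ∈ F x, F z) {y}) (setD (⋃ z ∈ F x, F z) (F y)))))))))))
    (T : X → X) (hsel : ∀ x : X, T x ∈ F x ∧ q ^ a * setRho {x} (F x) ≤ dist x (T x))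
    : ∀ x y : X, dist (T x) (T y) ≤ q ^ (1 - a) * (max (dist x y) (max (dist x (T x)) (max (dist y (T y)) (max (dist x (T y)) (max (dist y (T x)) (max (dist (T (T x)) x) (max (dist (T (T x)) (T x)) (max (dist (T (T x)) y) (dist (T (T x)) (T y)))))))))) := by
  intro x y
  set M := max (dist x y) (max (dist x (T x)) (max (dist y (T y)) (max (dist x (T y))
    (max (dist y (T x)) (max (dist (T (T x)) x) (max (dist (T (T x)) (T x))
    (max (dist (T (T x)) y) (dist (T (T x)) (T y)))))))))
  have hM : 0 ≤ M := dist_nonneg.trans (le_max_left _ _)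
  have hTx := (hsel x).1
  have hTy := (hsel y).1
  have hTTx : T (T x) ∈ ⋃ z ∈ F x, F z := Set.mem_biUnion hTx (hsel (T x)).1
  have hD {t : ℝ} (ht : t ≤ M) : t ≤ q ^ (-a) * M :=
    le_rpow_neg_mul_of_le hq0 hq1.le ha0.le hM ht
  have hρ (z : X) (hz : dist z (T z) ≤ M) : setRho {z} (F z) ≤ q ^ (-a) * M :=
    le_rpow_neg_mul_of_rpow_mul_le hq0 ((hsel z).2.trans hz)
  have hq : q ^ (1 - a) = q * q ^ (-a) := by
    rw [sub_eq_add_neg, Real.rpow_add hq0, Real.rpow_one]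
  rw [hq, mul_assoc]
  refine (dist_le_setRho (hbd x) (hbd y) hTx hTy).trans
    ((hF x y).trans (mul_le_mul_of_nonneg_left ?_ hq0.le))
  have hx : x ∈ ({x} : Set X) := rfl
  have hy : y ∈ ({y} : Set X) := rfl
  refine max_le (hD ?_) <| max_le (hρ x ?_) <| max_le (hρ y ?_) <|
    max_le (hD ((setD_le_dist hx hTy).trans ?_)) <|
    max_le (hD ((setD_le_dist hy hTx).trans ?_)) <|
    max_le (hD ((setD_le_dist hTTx hx).trans ?_)) <|
    max_le (hD ((setD_le_dist hTTx hTx).trans ?_)) <|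
    max_le (hD ((setD_le_dist hTTx hy).trans ?_)) (hD ((setD_le_dist hTTx hTy).trans ?_))
  all_goals simp only [M, le_max_iff, le_refl, true_or, or_true]

/-- A selection `T` of a multi-valued generalized quasi-contraction `F`
with `d(x, Tx) ≥ qᵃ · ρ(x, Fx)` is a single-valued generalized quasi-contraction with
constant `q^(1-a)`. -/
theorem stmt14 {X : Type*} [MetricSpace X] (F : X → Set X)
    (hne : ∀ x : X, (F x).Nonempty) (hbd : ∀ x : X, Bornology.IsBounded (F x))
    (q : ℝ) (hq0 : 0 < q) (hq1 : q < 1) (a : ℝ) (ha0 : 0 < a) (ha1 : a < 1)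
    (hF : ∀ x y : X, setRho (F x) (F y) ≤ q * (max (dist x y) (max (setRho {x} (F x)) (max (setRho {y} (F y)) (max (setD {x} (F y)) (max (setD {y} (F x)) (max (setD (⋃ z ∈ F x, F z) {x}) (max (setD (⋃ z ∈ F x, F z) (F x)) (max (setD (⋃ z ∈ F x, F z) {y}) (setD (⋃ z ∈ F x, F z) (F y)))))))))))
    (T : X → X) (hsel : ∀ x : X, T x ∈ F x ∧ q ^ a * setRho {x} (F x) ≤ dist x (T x))
    : ∀ x y : X, dist (T x) (T y) ≤ q ^ (1 - a) * (max (dist x y) (max (dist x (T x)) (max (dist y (T y)) (max (dist x (T y)) (max (dist y (T x)) (max (dist (T (T x)) x) (max (dist (T (T x)) (T x)) (max (dist (T (T x)) y) (dist (T (T x)) (T y)))))))))) :=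
  stmt14_general F hbd q hq0 hq1 a ha0 hF T hsel
end
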